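/- Let n ≥ 2, a ≥ 1, let D ⊊ ℝⁿ be a domain, let α be an a-cone arc in D joining x and y, and let s₀ ∈ α bisect α, i.e. ℓ(α[x,s₀]) = ℓ(α[s₀,y]). Then for every z ∈ α[x,s₀], k_D(x,z) ≤ ℓ_k(α[x,z]) ≤ 2a·log(1 + 2·ℓ(α[x,z])/d(x)), and symmetrically, for every z ∈ α[s₀,y], k_D(y,z) ≤ ℓ_k(α[y,z]) ≤ 2a·log(1 + 2·ℓ(α[y,z])/d(y)). (These are inequalities (3.16).) -/

import Mathlib

open Set Metric MeasureTheory

noncomputable section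

/-- Distance from a point to the boundary of `D`, i.e. to its complement. -/
def distBd {n : ℕ} (D : Set (EuclideanSpace ℝ (Fin n))) (z : EuclideanSpace ℝ (Fin n)) : ℝ :=
  infDist z Dᶜ

/-- A domain in ℝⁿ: a nonempty, open, connected, proper subset. -/
def IsProperDomain {n : ℕ} (D : Set (EuclideanSpace ℝ (Fin n))) : Prop :=
  IsOpen D ∧ IsConnected D ∧ D ≠ univ

/-- A rectifiable arc in `D`, parametrized by arclength on `[0, len]`:
the length of the subarc between parameters `s ≤ t` is exactly `t - s`. -/
structure Arc (n : ℕ) (D : Set (EuclideanSpace ℝ (Fin n))) where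
  len : ℝ
  len_nonneg : 0 ≤ len
  toFun : ℝ → EuclideanSpace ℝ (Fin n)
  injOn : InjOn toFun (Icc 0 len)
  mem : ∀ t ∈ Icc 0 len, toFun t ∈ D
  unitSpeed : ∀ s ∈ Icc 0 len, ∀ t ∈ Icc 0 len, s ≤ t →
    eVariationOn toFun (Icc s t) = ENNReal.ofReal (t - s)

namespace Arc

variable {n : ℕ} {D : Set (EuclideanSpace ℝ (Fin n))}

/-- The arc `γ` joins `x` to `y`. -/
def Joins (γ : Arc n D) (x y : EuclideanSpace ℝ (Fin n)) : Prop :=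
  γ.toFun 0 = x ∧ γ.toFun γ.len = y

/-- Quasihyperbolic length of the subarc of `γ` between parameters `u` and `v`:
`∫ |dz| / d(z)` along the (unit-speed) subarc. -/
def qhLen (γ : Arc n D) (u v : ℝ) : ℝ :=
  ∫ t in u..v, 1 / distBd D (γ.toFun t)

end Arc

/-- Quasihyperbolic distance in `D`. -/
def qhDist {n : ℕ} (D : Set (EuclideanSpace ℝ (Fin n))) (x y : EuclideanSpace ℝ (Fin n)) : ℝ :=
  sInf { r | ∃ γ : Arc n D, γ.Joins x y ∧ r = γ.qhLen 0 γ.len }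

/-- Inner (internal) distance in `D`: infimum of lengths of arcs joining the two points. -/
def innerDist {n : ℕ} (D : Set (EuclideanSpace ℝ (Fin n))) (x y : EuclideanSpace ℝ (Fin n)) : ℝ :=
  sInf { r | ∃ γ : Arc n D, γ.Joins x y ∧ r = γ.len }

namespace Arc

variable {n : ℕ} {D : Set (EuclideanSpace ℝ (Fin n))}

/-- `γ` is a quasihyperbolic geodesic: its quasihyperbolic length realizes the
quasihyperbolic distance between its endpoints. -/
def IsGeodesic (γ : Arc n D) : Prop :=
  γ.qhLen 0 γ.len = qhDist D (γ.toFun 0) (γ.toFun γ.len)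

/-- `γ` is a `c`-cone arc: `min (ℓ(γ[z₁,z]), ℓ(γ[z₂,z])) ≤ c·d(z)` for all `z ∈ γ`. -/
def IsConeArc (γ : Arc n D) (c : ℝ) : Prop :=
  ∀ t ∈ Icc 0 γ.len, min t (γ.len - t) ≤ c * distBd D (γ.toFun t)

end Arc

/-- `D` is an `a`-John domain. -/
def IsJohn {n : ℕ} (D : Set (EuclideanSpace ℝ (Fin n))) (a : ℝ) : Prop :=
  ∀ x ∈ D, ∀ y ∈ D, ∃ γ : Arc n D, γ.Joins x y ∧ γ.IsConeArc a

/-- `D` is a `c`-uniform domain. -/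
def IsUniform {n : ℕ} (D : Set (EuclideanSpace ℝ (Fin n))) (c : ℝ) : Prop :=
  ∀ x ∈ D, ∀ y ∈ D, ∃ γ : Arc n D, γ.Joins x y ∧ γ.IsConeArc c ∧ γ.len ≤ c * dist x y

/-- `f : D → D'` is an `(M,C)`-CQH homeomorphism (a homeomorphism of `D` onto `D'`
satisfying the coarse quasihyperbolic bi-Lipschitz condition). -/
def IsCQH {n : ℕ} (D D' : Set (EuclideanSpace ℝ (Fin n)))
    (f : EuclideanSpace ℝ (Fin n) → EuclideanSpace ℝ (Fin n)) (M C : ℝ) : Prop :=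
  ContinuousOn f D ∧ BijOn f D D' ∧
  ∀ x ∈ D, ∀ y ∈ D,
    (qhDist D x y - C) / M ≤ qhDist D' (f x) (f y) ∧
    qhDist D' (f x) (f y) ≤ M * qhDist D x y + C
/-!
On the half of a cone arc nearer to its initial point `x`, the cone condition gives
`s ≤ a·d(α s)` and the `1`-Lipschitz property of `d` gives `d(x) - s ≤ d(α s)`; together
`d(x) + 2s ≤ 4a·d(α s)`, and integrating `1/d` along `α` yields
`ℓ_k(α[x, α t]) ≤ 4a ∫₀ᵗ ds/(d(x) + 2s) = 2a·log(1 + 2t/d(x))`.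
The other half is the first half of the reversed arc, which is again an `a`-cone arc.
-/

open Real

lemma integral_inv_const_add_mul {c d t : ℝ} (hc : 0 < c) (hd : 0 < d) (ht : 0 ≤ t) :
    ∫ s in (0 : ℝ)..t, (d + c * s)⁻¹ = c⁻¹ * log (1 + c * t / d) := by
  rw [intervalIntegral.integral_comp_add_mul (fun s => s⁻¹) hc.ne',
    integral_inv_of_pos (by simpa using hd) (by positivity), smul_eq_mul, mul_zero, add_zero,
    add_div, div_self hd.ne']

section

variable {n : ℕ} {D : Set (EuclideanSpace ℝ (Fin n))}

lemma distBd_nonneg (z : EuclideanSpace ℝ (Fin n)) : 0 ≤ distBd D z :=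
  infDist_nonneg

lemma distBd_pos (hDo : IsOpen D) (hD : D ≠ univ) {z : EuclideanSpace ℝ (Fin n)}
    (hz : z ∈ D) : 0 < distBd D z :=
  (hDo.isClosed_compl.notMem_iff_infDist_pos (nonempty_compl.mpr hD)).mp
    (notMem_compl_iff.mpr hz)

lemma distBd_le_add_dist (z w : EuclideanSpace ℝ (Fin n)) :
    distBd D z ≤ distBd D w + dist z w :=
  infDist_le_infDist_add_dist

end

namespace Arc

variable {n : ℕ} {D : Set (EuclideanSpace ℝ (Fin n))}

lemma dist_le_sub (α : Arc n D) {s t : ℝ} (hs : s ∈ Icc 0 α.len) (ht : t ∈ Icc 0 α.len)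
    (hst : s ≤ t) : dist (α.toFun s) (α.toFun t) ≤ t - s := by
  have h := eVariationOn.edist_le α.toFun (s := Icc s t) ⟨le_rfl, hst⟩ ⟨hst, le_rfl⟩
  rwa [α.unitSpeed s hs t ht hst, edist_dist, ENNReal.ofReal_le_ofReal_iff (by linarith)] at h

lemma lipschitzOnWith (α : Arc n D) : LipschitzOnWith 1 α.toFun (Icc 0 α.len) := by
  refine LipschitzOnWith.of_dist_le_mul fun u hu v hv => ?_
  rw [NNReal.coe_one, one_mul, Real.dist_eq]
  rcases le_total u v with h | h
  · rw [abs_sub_comm, abs_of_nonneg (sub_nonneg.mpr h)]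
    exact α.dist_le_sub hu hv h
  · rw [abs_of_nonneg (sub_nonneg.mpr h), dist_comm]
    exact α.dist_le_sub hv hu h

lemma qhLen_nonneg (α : Arc n D) {u v : ℝ} (huv : u ≤ v) : 0 ≤ α.qhLen u v :=
  intervalIntegral.integral_nonneg huv fun _ _ => one_div_nonneg.mpr (distBd_nonneg _)

lemma qhDist_le_qhLen (α : Arc n D) :
    qhDist D (α.toFun 0) (α.toFun α.len) ≤ α.qhLen 0 α.len :=
  csInf_le ⟨0, by rintro r ⟨β, -, rfl⟩; exact β.qhLen_nonneg β.len_nonneg⟩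
    ⟨α, ⟨rfl, rfl⟩, rfl⟩

def truncate (α : Arc n D) (t : ℝ) (ht : t ∈ Icc 0 α.len) : Arc n D where
  len := t
  len_nonneg := ht.1
  toFun := α.toFun
  injOn := α.injOn.mono (Icc_subset_Icc_right ht.2)
  mem s hs := α.mem s (Icc_subset_Icc_right ht.2 hs)
  unitSpeed s hs u hu :=
    α.unitSpeed s (Icc_subset_Icc_right ht.2 hs) u (Icc_subset_Icc_right ht.2 hu)

lemma qhDist_le_qhLen_zero (α : Arc n D) {t : ℝ} (ht : t ∈ Icc 0 α.len) :
    qhDist D (α.toFun 0) (α.toFun t) ≤ α.qhLen 0 t :=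
  (α.truncate t ht).qhDist_le_qhLen

def reverse (α : Arc n D) : Arc n D where
  len := α.len
  len_nonneg := α.len_nonneg
  toFun s := α.toFun (α.len - s)
  injOn u hu v hv h := by
    have := α.injOn ⟨sub_nonneg.mpr hu.2, by linarith [hu.1]⟩
      ⟨sub_nonneg.mpr hv.2, by linarith [hv.1]⟩ h
    linarith
  mem t ht := α.mem _ ⟨sub_nonneg.mpr ht.2, by linarith [ht.1]⟩
  unitSpeed s hs t ht hst := by
    rw [show (fun u => α.toFun (α.len - u)) = α.toFun ∘ (α.len - ·) from rfl,
      eVariationOn.comp_eq_of_antitoneOn α.toFun _ fun u _ v _ huv => sub_le_sub_left huv _,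
      image_const_sub_Icc, α.unitSpeed _ ⟨sub_nonneg.mpr ht.2, by linarith [ht.1]⟩
        _ ⟨sub_nonneg.mpr hs.2, by linarith [hs.1]⟩ (by linarith)]
    ring_nf

@[simp] lemma reverse_len (α : Arc n D) : α.reverse.len = α.len := rfl

@[simp] lemma reverse_toFun (α : Arc n D) (s : ℝ) :
    α.reverse.toFun s = α.toFun (α.len - s) := rfl

lemma qhLen_reverse (α : Arc n D) (t : ℝ) :
    α.reverse.qhLen 0 (α.len - t) = α.qhLen t α.len := by
  simp only [qhLen, reverse_toFun]
  rw [intervalIntegral.integral_comp_sub_left (fun r => 1 / distBd D (α.toFun r)),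
    sub_sub_cancel, sub_zero]

lemma IsConeArc.reverse {α : Arc n D} {c : ℝ} (h : α.IsConeArc c) : α.reverse.IsConeArc c := by
  intro t ht
  have := h (α.len - t) ⟨sub_nonneg.mpr ht.2, by linarith [ht.1]⟩
  rwa [sub_sub_cancel, min_comm] at this

lemma IsConeArc.le_mul_distBd {α : Arc n D} {c t : ℝ} (h : α.IsConeArc c)
    (ht : t ∈ Icc 0 α.len) (hhalf : t ≤ α.len - t) : t ≤ c * distBd D (α.toFun t) := by
  simpa only [min_eq_left hhalf] using h t ht

lemma IsConeArc.distBd_add_two_mul_le {α : Arc n D} {c s : ℝ} (h : α.IsConeArc c) (hc : 1 ≤ c)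
    (hs : s ∈ Icc 0 α.len) (hhalf : s ≤ α.len - s) :
    distBd D (α.toFun 0) + 2 * s ≤ 4 * c * distBd D (α.toFun s) := by
  have hcone := h.le_mul_distBd hs hhalf
  have hlip := (distBd_le_add_dist (D := D) (α.toFun 0) (α.toFun s)).trans
    (add_le_add_right (α.dist_le_sub ⟨le_rfl, α.len_nonneg⟩ hs hs.1) _)
  nlinarith [distBd_nonneg (D := D) (α.toFun s)]

lemma IsConeArc.qhLen_le_log {α : Arc n D} {c t : ℝ} (h : α.IsConeArc c) (hc : 1 ≤ c)
    (hDo : IsOpen D) (hD : D ≠ univ) (ht : t ∈ Icc 0 α.len) (hhalf : t ≤ α.len - t) :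
    α.qhLen 0 t ≤ 2 * c * log (1 + 2 * t / distBd D (α.toFun 0)) := by
  set d₀ := distBd D (α.toFun 0)
  have hd₀ : 0 < d₀ := distBd_pos hDo hD (α.mem 0 ⟨le_rfl, α.len_nonneg⟩)
  have hsub : Icc 0 t ⊆ Icc 0 α.len := Icc_subset_Icc_right ht.2
  have hpos : ∀ s ∈ Icc 0 α.len, 0 < distBd D (α.toFun s) := fun s hs =>
    distBd_pos hDo hD (α.mem s hs)
  have hint : IntervalIntegrable (fun s => 1 / distBd D (α.toFun s)) volume 0 t := by
    refine ContinuousOn.intervalIntegrable_of_Icc ht.1 (continuousOn_const.div ?_ ?_)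
    · exact (continuous_infDist_pt _).comp_continuousOn
        (α.lipschitzOnWith.continuousOn.mono hsub)
    · exact fun s hs => (hpos s (hsub hs)).ne'
  have hpointwise :
      ∀ s ∈ Icc 0 t, 1 / distBd D (α.toFun s) ≤ 4 * c * (d₀ + 2 * s)⁻¹ := by
    intro s hs
    rw [← div_eq_mul_inv, div_le_div_iff₀ (hpos s (hsub hs)) (by linarith [hs.1])]
    linarith [h.distBd_add_two_mul_le hc (hsub hs) (by linarith [hs.2])]
  have hint' : IntervalIntegrable (fun s => 4 * c * (d₀ + 2 * s)⁻¹) volume 0 t := by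
    refine ContinuousOn.intervalIntegrable_of_Icc ht.1 (continuousOn_const.mul ?_)
    exact ((continuous_const_add d₀).comp (continuous_const_mul 2)).continuousOn.inv₀
      fun s hs => (by linarith [hs.1] : 0 < d₀ + 2 * s).ne'
  calc α.qhLen 0 t ≤ ∫ s in (0 : ℝ)..t, 4 * c * (d₀ + 2 * s)⁻¹ :=
        intervalIntegral.integral_mono_on ht.1 hint hint' hpointwise
    _ = 2 * c * log (1 + 2 * t / d₀) := by
        rw [intervalIntegral.integral_const_mul, integral_inv_const_add_mul two_pos hd₀ ht.1]
        ring

end Arc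

theorem ineq_3_16_general (n : ℕ) (a : ℝ) (ha : 1 ≤ a)
    (D : Set (EuclideanSpace ℝ (Fin n))) (hD : IsProperDomain D)
    (α : Arc n D) (x y : EuclideanSpace ℝ (Fin n)) (hxy : α.Joins x y)
    (hcone : α.IsConeArc a)
    (t₀ : ℝ) (hbis : t₀ = α.len - t₀) :
    (∀ t ∈ Icc (0:ℝ) t₀,
      qhDist D x (α.toFun t) ≤ α.qhLen 0 t ∧
      α.qhLen 0 t ≤ 2 * a * Real.log (1 + 2 * t / distBd D x)) ∧
    (∀ t ∈ Icc t₀ α.len,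
      qhDist D y (α.toFun t) ≤ α.qhLen t α.len ∧
      α.qhLen t α.len ≤ 2 * a * Real.log (1 + 2 * (α.len - t) / distBd D y)) := by
  obtain ⟨rfl, rfl⟩ := hxy
  constructor
  · rintro t ⟨ht0, htt₀⟩
    have ht : t ∈ Icc 0 α.len := ⟨ht0, by linarith [α.len_nonneg]⟩
    exact ⟨α.qhDist_le_qhLen_zero ht,
      hcone.qhLen_le_log ha hD.1 hD.2.2 ht (by linarith)⟩
  · rintro t ⟨ht₀t, htlen⟩
    have ht : α.len - t ∈ Icc 0 α.reverse.len := ⟨sub_nonneg.mpr htlen, by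
      rw [Arc.reverse_len]; linarith⟩
    have hdist := α.reverse.qhDist_le_qhLen_zero ht
    have hlog := hcone.reverse.qhLen_le_log ha hD.1 hD.2.2 ht
      (by rw [Arc.reverse_len]; linarith)
    simp only [Arc.reverse_toFun, sub_zero, sub_sub_cancel, Arc.qhLen_reverse] at hdist hlog
    exact ⟨hdist, hlog⟩

/-- **Inequalities (3.16).** Let `D ⊊ ℝⁿ` (`n ≥ 2`) be a domain, `α` an `a`-cone arc
(`a ≥ 1`) joining `x` and `y` in `D`, and let `s₀ = α(t₀)` bisect `α`.  Then for every
`z ∈ α[x,s₀]`: `k_D(x,z) ≤ ℓ_k(α[x,z]) ≤ 2a·log(1 + 2ℓ(α[x,z])/d(x))`, and symmetrically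
for every `z ∈ α[s₀,y]`. -/
theorem ineq_3_16 (n : ℕ) (hn : 2 ≤ n) (a : ℝ) (ha : 1 ≤ a)
    (D : Set (EuclideanSpace ℝ (Fin n))) (hD : IsProperDomain D)
    (α : Arc n D) (x y : EuclideanSpace ℝ (Fin n)) (hxy : α.Joins x y)
    (hcone : α.IsConeArc a)
    (t₀ : ℝ) (ht₀ : t₀ ∈ Icc (0:ℝ) α.len) (hbis : t₀ = α.len - t₀) :
    (∀ t ∈ Icc (0:ℝ) t₀,
      qhDist D x (α.toFun t) ≤ α.qhLen 0 t ∧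
      α.qhLen 0 t ≤ 2 * a * Real.log (1 + 2 * t / distBd D x)) ∧
    (∀ t ∈ Icc t₀ α.len,
      qhDist D y (α.toFun t) ≤ α.qhLen t α.len ∧
      α.qhLen t α.len ≤ 2 * a * Real.log (1 + 2 * (α.len - t) / distBd D y)) :=
  ineq_3_16_general n a ha D hD α x y hxy hcone t₀ hbis
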